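/- arXiv:0905.4789 — 2 statements merged into one kernel-verified Lean document; each statement's English description precedes it below -/
import Mathlib

section
/- Let A be a bounded pseudo-BCK algebra and s a Bosbach state on A. Then Ker(s) = {a ∈ A : s(a) = 1} is а proper and normal filter of A. -/
universe u

class PseudoBCK (A : Type u) extends PartialOrder A where
  arr : A → A → A
  sarr : A → A → A
  one : A
  ax1  : ∀ x y z : A, arr x y ≤ sarr (arr y z) (arr x z)
  ax1' : ∀ x y z : A, sarr x y ≤ arr (sarr y z) (sarr x z)
  ax2  : ∀ x y : A, x ≤ sarr (arr x y) y
  ax2' : ∀ x y : A, x ≤ arr (sarr x y) y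
  ax4  : ∀ x : A, x ≤ one
  ax6  : ∀ x y : A, x ≤ y ↔ arr x y = one
  ax6' : ∀ x y : A, x ≤ y ↔ sarr x y = one

namespace PseudoBCK

variable {A : Type u} [PseudoBCK A]

/-- `x ∨₁ y = (x → y) ⤳ y`. -/
def sup1 (x y : A) : A := sarr (arr x y) y

/-- `x ∨₂ y = (x ⤳ y) → y`. -/
def sup2 (x y : A) : A := arr (sarr x y) y

end PseudoBCK

open PseudoBCK

class BoundedPseudoBCK (A : Type u) extends PseudoBCK A where
  zero : A
  zero_le : ∀ x : A, zero ≤ x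

namespace BoundedPseudoBCK

variable {A : Type u} [BoundedPseudoBCK A]

/-- `x⁻ = x → 0`. -/
def neg (x : A) : A := arr x zero

/-- `x˜ = x ⤳ 0`. -/
def tneg (x : A) : A := sarr x zero

end BoundedPseudoBCK

open BoundedPseudoBCK

/-- A Bosbach state on a bounded pseudo-BCK algebra. -/
def IsBosbachState (A : Type u) [BoundedPseudoBCK A] (s : A → ℝ) : Prop :=
  (∀ x : A, s x ∈ Set.Icc (0 : ℝ) 1) ∧
  s (zero : A) = 0 ∧ s (one : A) = 1 ∧
  (∀ x y : A, s x + s (arr x y) = s y + s (arr y x)) ∧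
  (∀ x y : A, s x + s (sarr x y) = s y + s (sarr y x))

/-- A filter (deductive system) of a pseudo-BCK algebra. -/
def IsBCKFilter (A : Type u) [PseudoBCK A] (F : Set A) : Prop :=
  (one : A) ∈ F ∧ ∀ a b : A, a ∈ F → arr a b ∈ F → b ∈ F

/-- A normal filter: `a → b ∈ F ↔ a ⤳ b ∈ F`. -/
def IsBCKNormalFilter (A : Type u) [PseudoBCK A] (F : Set A) : Prop :=
  IsBCKFilter A F ∧ ∀ a b : A, arr a b ∈ F ↔ sarr a b ∈ F

/-- A maximal filter: proper and not properly contained in another proper filter. -/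
def IsBCKMaximalFilter (A : Type u) [PseudoBCK A] (F : Set A) : Prop :=
  IsBCKFilter A F ∧ F ≠ Set.univ ∧
    ∀ G : Set A, IsBCKFilter A G → F ⊆ G → G ≠ Set.univ → G = F

section Aux

open PseudoBCK

variable {A : Type u} [PseudoBCK A]

lemma pbck_arr_self (x : A) : arr x x = one := (ax6 x x).mp le_rfl

lemma pbck_sarr_self (x : A) : sarr x x = one := (ax6' x x).mp le_rfl

lemma pbck_arr_one (x : A) : arr x one = one := (ax6 x one).mp (ax4 x)

lemma pbck_eq_one {x : A} (h : (one : A) ≤ x) : x = one := le_antisymm (ax4 x) h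

lemma pbck_le_arr (x z : A) : z ≤ arr x z := by
  have h1 : z ≤ arr (sarr z z) z := ax2' z z
  rw [pbck_sarr_self] at h1
  have h2 : arr x one ≤ sarr (arr one z) (arr x z) := ax1 x one z
  rw [pbck_arr_one] at h2
  have h3 : arr one z ≤ arr x z := (ax6' _ _).mpr (pbck_eq_one h2)
  exact le_trans h1 h3

lemma pbck_sarr_one (x : A) : sarr x one = one := (ax6' x one).mp (ax4 x)

lemma pbck_le_sarr (x z : A) : z ≤ sarr x z := by
  have h1 : z ≤ sarr (arr z z) z := ax2 z z
  rw [pbck_arr_self] at h1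
  have h2 : sarr x one ≤ arr (sarr one z) (sarr x z) := ax1' x one z
  rw [pbck_sarr_one] at h2
  have h3 : sarr one z ≤ sarr x z := (ax6 _ _).mpr (pbck_eq_one h2)
  exact le_trans h1 h3

lemma pbck_arr_antitone {x u : A} (h : x ≤ u) (z : A) : arr u z ≤ arr x z := by
  have h2 : arr x u ≤ sarr (arr u z) (arr x z) := ax1 x u z
  rw [(ax6 x u).mp h] at h2
  exact (ax6' _ _).mpr (pbck_eq_one h2)

lemma pbck_sarr_antitone {x u : A} (h : x ≤ u) (z : A) : sarr u z ≤ sarr x z := by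
  have h2 : sarr x u ≤ arr (sarr u z) (sarr x z) := ax1' x u z
  rw [(ax6' x u).mp h] at h2
  exact (ax6 _ _).mpr (pbck_eq_one h2)

end Aux

section StateAux

open PseudoBCK BoundedPseudoBCK

variable {A : Type u} [BoundedPseudoBCK A] {s : A → ℝ} (hs : IsBosbachState A s)

lemma bosbach_mono (hs : IsBosbachState A s) {a b : A} (h : a ≤ b) : s a ≤ s b := by
  obtain ⟨hIcc, -, h1, harr, -⟩ := hs
  have := harr a b
  rw [(ax6 a b).mp h, h1] at this
  have h2 := (hIcc (arr b a)).2
  linarith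

lemma bosbach_arr_eq_sarr (hs : IsBosbachState A s) (x y : A) :
    s (arr x y) = s (sarr x y) := by
  obtain ⟨hIcc, h0, h1, harr, hsarr⟩ := hs
  set u : A := sarr (arr x y) y with hu
  set v : A := arr (sarr x y) y with hv
  -- s (arr x y) + s u = s y + 1
  have e1 : s (arr x y) + s u = s y + 1 := by
    have := hsarr (arr x y) y
    rw [(ax6' y (arr x y)).mp (pbck_le_arr x y), h1] at this
    linarith [this]
  -- s u + s (sarr u y) = s y + 1
  have e2 : s u + s (sarr u y) = s y + 1 := by
    have := hsarr u y
    rw [(ax6' y u).mp (pbck_le_sarr (arr x y) y), h1] at this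
    linarith [this]
  have e3 : s (sarr u y) = s (arr x y) := by linarith
  have le1 : s (arr x y) ≤ s (sarr x y) := by
    rw [← e3]
    exact bosbach_mono ⟨hIcc, h0, h1, harr, hsarr⟩
      (pbck_sarr_antitone (ax2 x y) y)
  have f1 : s (sarr x y) + s v = s y + 1 := by
    have := harr (sarr x y) y
    rw [(ax6 y (sarr x y)).mp (pbck_le_sarr x y), h1] at this
    linarith [this]
  have f2 : s v + s (arr v y) = s y + 1 := by
    have := harr v y
    rw [(ax6 y v).mp (pbck_le_arr (sarr x y) y), h1] at this
    linarith [this]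
  have f3 : s (arr v y) = s (sarr x y) := by linarith
  have le2 : s (sarr x y) ≤ s (arr x y) := by
    rw [← f3]
    exact bosbach_mono ⟨hIcc, h0, h1, harr, hsarr⟩
      (pbck_arr_antitone (ax2' x y) y)
  linarith

end StateAux

theorem stmt_7 {A : Type u} [BoundedPseudoBCK A] (s : A → ℝ)
    (hs : IsBosbachState A s) :
    IsBCKNormalFilter A {a : A | s a = 1} ∧ {a : A | s a = 1} ≠ Set.univ := by
  obtain ⟨hIcc, h0, h1, harr, hsarr⟩ := hs
  refine ⟨⟨⟨h1, ?_⟩, ?_⟩, ?_⟩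
  · intro a b ha hab
    simp only [Set.mem_setOf_eq] at *
    have := harr a b
    rw [ha, hab] at this
    have hb1 := (hIcc b).2
    have hba := (hIcc (arr b a)).2
    have hb0 := (hIcc b).1
    linarith
  · intro a b
    simp only [Set.mem_setOf_eq]
    rw [bosbach_arr_eq_sarr ⟨hIcc, h0, h1, harr, hsarr⟩ a b]
  · intro h
    have : (zero : A) ∈ {a : A | s a = 1} := h ▸ Set.mem_univ _
    simp only [Set.mem_setOf_eq] at this
    rw [h0] at this
    norm_num at this
end

section
/- Let A be a pseudo-BCK algebra. Then: (1) if m is a measure on A and y ≤ x, then m((x→y)⤳y) = m((x⤳y)→y) = m(x); (2) if m is a measure on A, then Ker₀(m) = {x ∈ A : m(x) = 0} is a normal filter of A; (3) any measure-morphism on A is a measure on A. -/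
universe u

open PseudoBCK

/-- A measure on a pseudo-BCK algebra: a nonnegative map with
`m (x → y) = m (x ⤳ y) = m y - m x` whenever `y ≤ x`. -/
def IsMeasure (A : Type u) [PseudoBCK A] (m : A → ℝ) : Prop :=
  (∀ x : A, 0 ≤ m x) ∧
  ∀ x y : A, y ≤ x → m (arr x y) = m y - m x ∧ m (sarr x y) = m y - m x

/-- A measure-morphism on a pseudo-BCK algebra:
`m (x → y) = m (x ⤳ y) = max 0 (m y - m x)` for all `x, y`. -/
def IsMeasureMorphism (A : Type u) [PseudoBCK A] (m : A → ℝ) : Prop :=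
  (∀ x : A, 0 ≤ m x) ∧
  ∀ x y : A, m (arr x y) = max 0 (m y - m x) ∧ m (sarr x y) = max 0 (m y - m x)

section Aux

variable {A : Type u} [PseudoBCK A]

lemma arr_anti {a b : A} (c : A) (h : a ≤ b) : arr b c ≤ arr a c := by
  have h1 : arr a b = (one : A) := (ax6 a b).mp h
  have h2 := ax1 a b c
  rw [h1] at h2
  have h3 : sarr (arr b c) (arr a c) = (one : A) :=
    le_antisymm (ax4 _) h2
  exact (ax6' _ _).mpr h3

lemma sarr_anti {a b : A} (c : A) (h : a ≤ b) : sarr b c ≤ sarr a c := by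
  have h1 : sarr a b = (one : A) := (ax6' a b).mp h
  have h2 := ax1' a b c
  rw [h1] at h2
  have h3 : arr (sarr b c) (sarr a c) = (one : A) :=
    le_antisymm (ax4 _) h2
  exact (ax6 _ _).mpr h3

lemma le_arr (x y : A) : y ≤ arr x y := by
  have h1 : sarr y y = (one : A) := (ax6' y y).mp le_rfl
  have h2 := ax2' y y
  rw [h1] at h2
  exact h2.trans (arr_anti y (ax4 x))

lemma le_sarr (x y : A) : y ≤ sarr x y := by
  have h1 : arr y y = (one : A) := (ax6 y y).mp le_rfl
  have h2 := ax2 y y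
  rw [h1] at h2
  exact h2.trans (sarr_anti y (ax4 x))

lemma m_anti {m : A → ℝ} (hm : IsMeasure A m) {p q : A} (h : p ≤ q) :
    m q ≤ m p := by
  have h1 := (hm.2 q p h).1
  have h2 := hm.1 (arr q p)
  linarith

lemma measure_arr_eq_sarr {m : A → ℝ} (hm : IsMeasure A m) (a b : A) :
    m (arr a b) = m (sarr a b) := by
  -- m (sup1 a b) = m b - m (arr a b)
  have hs1 : m (sarr (arr a b) b) = m b - m (arr a b) :=
    (hm.2 _ _ (le_arr a b)).2
  have h2 : m (sarr (sarr (arr a b) b) b) = m b - m (sarr (arr a b) b) :=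
    (hm.2 _ _ (le_sarr _ b)).2
  have hle : sarr (sarr (arr a b) b) b ≤ sarr a b := sarr_anti b (ax2 a b)
  have h3 : m (sarr a b) ≤ m (sarr (sarr (arr a b) b) b) := m_anti hm hle
  -- m (sup2 a b) = m b - m (sarr a b)
  have hs2 : m (arr (sarr a b) b) = m b - m (sarr a b) :=
    (hm.2 _ _ (le_sarr a b)).1
  have h4 : m (arr (arr (sarr a b) b) b) = m b - m (arr (sarr a b) b) :=
    (hm.2 _ _ (le_arr _ b)).1
  have hle' : arr (arr (sarr a b) b) b ≤ arr a b := arr_anti b (ax2' a b)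
  have h5 : m (arr a b) ≤ m (arr (arr (sarr a b) b) b) := m_anti hm hle'
  linarith

end Aux

theorem stmt_14 {A : Type u} [PseudoBCK A] :
    (∀ m : A → ℝ, IsMeasure A m → ∀ x y : A, y ≤ x →
      m (sarr (arr x y) y) = m x ∧ m (arr (sarr x y) y) = m x) ∧
    (∀ m : A → ℝ, IsMeasure A m → IsBCKNormalFilter A {x : A | m x = 0}) ∧
    (∀ m : A → ℝ, IsMeasureMorphism A m → IsMeasure A m) := by
  refine ⟨?_, ?_, ?_⟩
  · intro m hm x y h
    have h1 : m (arr x y) = m y - m x := (hm.2 x y h).1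
    have h2 : m (sarr x y) = m y - m x := (hm.2 x y h).2
    have h3 : m (sarr (arr x y) y) = m y - m (arr x y) :=
      (hm.2 _ _ (le_arr x y)).2
    have h4 : m (arr (sarr x y) y) = m y - m (sarr x y) :=
      (hm.2 _ _ (le_sarr x y)).1
    constructor <;> linarith
  · intro m hm
    have hone : m (one : A) = 0 := by
      have h1 := (hm.2 (one : A) (one : A) le_rfl).1
      rw [(ax6 (one : A) (one : A)).mp le_rfl] at h1
      linarith
    refine ⟨⟨hone, ?_⟩, ?_⟩
    · intro a b ha hab
      simp only [Set.mem_setOf_eq] at *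
      have h1 : m (sarr (arr a b) b) = m b - m (arr a b) :=
        (hm.2 _ _ (le_arr a b)).2
      have h2 : m (sarr (arr a b) b) ≤ m a := m_anti hm (ax2 a b)
      have h3 : 0 ≤ m b := hm.1 b
      linarith
    · intro a b
      simp only [Set.mem_setOf_eq, measure_arr_eq_sarr hm a b]
  · intro m hm
    refine ⟨hm.1, fun x y h => ?_⟩
    have h1 : m x ≤ m y := by
      have h2 := (hm.2 y x).1
      rw [(ax6 y x).mp h] at h2
      have h3 := (hm.2 x x).1
      rw [(ax6 x x).mp le_rfl] at h3
      simp only [sub_self, max_self] at h3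
      have h4 : m x - m y ≤ max 0 (m x - m y) := le_max_right _ _
      rw [← h2, h3] at h4
      linarith
    have hmax : max 0 (m y - m x) = m y - m x := max_eq_right (by linarith)
    exact ⟨(hm.2 x y).1.trans hmax, (hm.2 x y).2.trans hmax⟩
end
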